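/- Let R be a commutative ring whose nilradical N(R) is nilpotent. Every element g of the group ℙ(R) (products of an element of 1 + t^{-1}·N(R((u)))[t^{-1}]-type and u^{-1}-type tails) decomposes uniquely as a convergent infinite product g = ∏_{(i,j) ≤ (0,−1), i > n, j > m} (1 − c_{i,j} u^j t^i) with all c_{i,j} ∈ N(R), for appropriate bounds n < 0, m. -/

import Mathlib

/-!
Expanding a finite partial product, the coefficient of `uʲ tⁱ` is a sum over subsets `T ⊆ S`
with `∑ T = (i, j)` of `± ∏_{x ∈ T} c x`. Since `N(R)^q = 0`, only subsets with fewer than `q`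
elements contribute, so this coefficient is constant once `S` contains an explicit finite box,
and convergence to `g` means that these stable coefficients are those of `g`.

At `p ≠ 0` the stable coefficient is `-c p` plus products of at least two values of `c`, so two
solutions that agree modulo `N(R)^k` agree modulo `N(R)^(k+1)`: this gives uniqueness, and
existence by iterating `c ↦ c + (stable coefficients of c) - (coefficients of g - 1)`, which is
stationary after `q` steps. If `g - 1` is supported above `b`, the iterates keep `c p` in
`N(R)^(k+1)` whenever `p` is more than `k` steps of size `b` away from the origin; hence products
of `c` whose indices sum to a point with a coordinate below `q b` vanish, and the solution lives
on indices above `(q + 1) b`.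
-/

namespace CC

variable {R : Type*} [CommRing R]

/-- `x ∈ W_{m,{mᵢ}} = t^m R((u))[[t]] + ∑ᵢ u^{mᵢ} tⁱ R[[u]]`, a basic open subgroup of
`R((u))((t))`. -/
def MemW (m : ℤ) (mi : ℤ → ℤ) (x : LaurentSeries (LaurentSeries R)) : Prop :=
  ∀ s : ℤ, s < m → ∀ w : ℤ, w < mi s → (x.coeff s).coeff w = 0

/-- `g ∈ ℙ(R) = 1 + 𝔭(R)`: `g − 1` is supported in bidegrees `(i,j) ≤ (0,−1)`
(lexicographically) and has all coefficients nilpotent. -/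
def InPGroup (g : LaurentSeries (LaurentSeries R)) : Prop :=
  (∀ s : ℤ, 0 < s → (g - 1).coeff s = 0) ∧
  (∀ w : ℤ, 0 ≤ w → ((g - 1).coeff 0).coeff w = 0) ∧
  (∀ s w : ℤ, IsNilpotent (((g - 1).coeff s).coeff w))

open Finset Function

section NilpotentIdeal

variable {ι : Type*} {I J : Ideal R} {q k : ℕ}

lemma prod_eq_zero_of_le_card (hq : I ^ q = ⊥) {T : Finset ι} {f : ι → R}
    (hf : ∀ x ∈ T, f x ∈ I) (hT : q ≤ #T) : ∏ x ∈ T, f x = 0 := by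
  have h : ∏ x ∈ T, f x ∈ I ^ #T := by
    simpa [prod_const] using Ideal.prod_mem_prod (I := fun _ => I) hf
  simpa [hq] using Ideal.pow_le_pow_right hT h

lemma prod_sub_prod_mem {T : Finset ι} {f g : ι → R} (h : ∀ x ∈ T, f x - g x ∈ J) :
    ∏ x ∈ T, f x - ∏ x ∈ T, g x ∈ J := by
  rw [← Ideal.Quotient.eq, map_prod, map_prod]
  exact prod_congr rfl fun x hx => Ideal.Quotient.eq.2 (h x hx)

lemma prod_sub_prod_mem_pow_succ [DecidableEq ι] {T : Finset ι} {f g : ι → R}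
    (hf : ∀ x ∈ T, f x ∈ I) (hg : ∀ x ∈ T, g x ∈ I) (hfg : ∀ x ∈ T, f x - g x ∈ I ^ k)
    (hT : 2 ≤ #T) : ∏ x ∈ T, f x - ∏ x ∈ T, g x ∈ I ^ (k + 1) := by
  obtain ⟨a, ha⟩ : T.Nonempty := card_pos.1 (by omega)
  obtain ⟨a', ha'⟩ : (T.erase a).Nonempty := card_pos.1 (by rw [card_erase_of_mem ha]; omega)
  rw [← mul_prod_erase T f ha, ← mul_prod_erase T g ha]
  have hrest : ∏ x ∈ T.erase a, f x - ∏ x ∈ T.erase a, g x ∈ I ^ k :=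
    prod_sub_prod_mem fun x hx => hfg x (mem_of_mem_erase hx)
  have hg' : ∏ x ∈ T.erase a, g x ∈ I := Ideal.prod_mem I ha' (hg a' (mem_of_mem_erase ha'))
  have hsplit : f a * ∏ x ∈ T.erase a, f x - g a * ∏ x ∈ T.erase a, g x
      = f a * (∏ x ∈ T.erase a, f x - ∏ x ∈ T.erase a, g x)
        + (f a - g a) * ∏ x ∈ T.erase a, g x := by ring
  rw [hsplit]
  refine add_mem ?_ ?_
  · rw [pow_succ']; exact Ideal.mul_mem_mul (hf a ha) hrest
  · rw [pow_succ]; exact Ideal.mul_mem_mul (hfg a ha) hg'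

/-- The iterates `Φ^[j] x` become stationary after `q` steps. -/
lemma exists_isFixedPt_of_pow_eq_bot (hq : I ^ q = ⊥) {Φ : (ι → R) → ι → R}
    {P : (ι → R) → Prop} (hP : ∀ c, P c → P (Φ c))
    (hΦ : ∀ k c₁ c₂, P c₁ → P c₂ → (∀ i, c₁ i - c₂ i ∈ I ^ k) →
      ∀ i, Φ c₁ i - Φ c₂ i ∈ I ^ (k + 1))
    {x : ι → R} (hx : P x) : ∃ c, P c ∧ IsFixedPt Φ c := by
  have hPit : ∀ j, P (Φ^[j] x) := fun j => by
    induction j with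
    | zero => exact hx
    | succ j ih => rw [iterate_succ_apply']; exact hP _ ih
  have hdist : ∀ j i, Φ^[j + 1] x i - Φ^[j] x i ∈ I ^ j := fun j => by
    induction j with
    | zero => simp
    | succ j ih =>
      have := hΦ j _ _ (hPit (j + 1)) (hPit j) ih
      simpa only [← iterate_succ_apply' Φ] using this
  refine ⟨Φ^[q] x, hPit q, funext fun i => ?_⟩
  have := hdist q i
  rwa [hq, Ideal.mem_bot, sub_eq_zero, iterate_succ_apply'] at this

end NilpotentIdeal

/-- The coefficient of `u^p.2 t^p.1`. -/
def coeff₂ (x : LaurentSeries (LaurentSeries R)) (p : ℤ × ℤ) : R := (x.coeff p.1).coeff p.2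

noncomputable def single₂ (p : ℤ × ℤ) (r : R) : LaurentSeries (LaurentSeries R) :=
  HahnSeries.single p.1 (HahnSeries.single p.2 r)

lemma coeff₂_sub (x y : LaurentSeries (LaurentSeries R)) (p : ℤ × ℤ) :
    coeff₂ (x - y) p = coeff₂ x p - coeff₂ y p := by
  simp [coeff₂]

lemma coeff₂_sum {ι : Type*} (s : Finset ι) (x : ι → LaurentSeries (LaurentSeries R))
    (p : ℤ × ℤ) : coeff₂ (∑ i ∈ s, x i) p = ∑ i ∈ s, coeff₂ (x i) p := by
  simp [coeff₂]

lemma coeff₂_one (p : ℤ × ℤ) :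
    coeff₂ (1 : LaurentSeries (LaurentSeries R)) p = if p = 0 then 1 else 0 := by
  rcases p with ⟨s, w⟩
  by_cases hs : s = 0 <;> by_cases hw : w = 0 <;> simp [coeff₂, HahnSeries.coeff_one, hs, hw]

lemma coeff₂_single₂ (p p' : ℤ × ℤ) (r : R) :
    coeff₂ (single₂ p r) p' = if p = p' then r else 0 := by
  rcases p with ⟨s, w⟩; rcases p' with ⟨s', w'⟩
  simp only [coeff₂, single₂, HahnSeries.coeff_single, Prod.mk.injEq]
  split_ifs <;> simp_all [eq_comm]

lemma single₂_neg (p : ℤ × ℤ) (r : R) : single₂ p (-r) = -single₂ p r := by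
  simp [single₂]

lemma prod_single₂ (T : Finset (ℤ × ℤ)) (c : ℤ × ℤ → R) :
    ∏ x ∈ T, single₂ x (c x) = single₂ (∑ x ∈ T, x) (∏ x ∈ T, c x) := by
  classical
  induction T using Finset.induction_on with
  | empty => rfl
  | insert a T ha ih =>
    rw [prod_insert ha, ih, sum_insert ha, prod_insert ha]
    simp [single₂, HahnSeries.single_mul_single]

def partialCoeff (c : ℤ × ℤ → R) (S : Finset (ℤ × ℤ)) (p : ℤ × ℤ) : R :=
  ∑ T ∈ S.powerset with ∑ x ∈ T, x = p, (-1) ^ #T * ∏ x ∈ T, c x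

lemma coeff₂_prod (c : ℤ × ℤ → R) (S : Finset (ℤ × ℤ)) (p : ℤ × ℤ) :
    coeff₂ (∏ x ∈ S, (1 - single₂ x (c x))) p = partialCoeff c S p := by
  have h : ∏ x ∈ S, (1 - single₂ x (c x)) =
      ∑ T ∈ S.powerset, single₂ (∑ x ∈ T, x) ((-1) ^ #T * ∏ x ∈ T, c x) := by
    simp_rw [sub_eq_neg_add, prod_add, prod_const_one, mul_one, ← single₂_neg, prod_single₂,
      prod_neg]
  rw [h, coeff₂_sum, partialCoeff, sum_filter]
  simp only [coeff₂_single₂]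

def lexNegAbove (b : ℤ) : Set (ℤ × ℤ) :=
  {p | b < p.1 ∧ b < p.2 ∧ (p.1 < 0 ∨ (p.1 = 0 ∧ p.2 ≤ -1))}

lemma lexNegAbove_mono {b b' : ℤ} (h : b ≤ b') : lexNegAbove b' ⊆ lexNegAbove b :=
  fun _ ⟨h₁, h₂, h₃⟩ => ⟨by omega, by omega, h₃⟩

lemma ne_zero_of_mem_lexNegAbove {b : ℤ} {p : ℤ × ℤ} (hp : p ∈ lexNegAbove b) : p ≠ 0 := by
  rintro rfl
  simp [lexNegAbove] at hp

lemma sum_lexNeg {T : Finset (ℤ × ℤ)} (hT : T.Nonempty)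
    (h : ∀ x ∈ T, x.1 < 0 ∨ (x.1 = 0 ∧ x.2 ≤ -1)) :
    (∑ x ∈ T, x).1 < 0 ∨ ((∑ x ∈ T, x).1 = 0 ∧ (∑ x ∈ T, x).2 ≤ -1) := by
  induction hT using Nonempty.cons_induction with
  | singleton a => simpa using h a
  | cons a T ha _ ih =>
    have h₁ := h a (mem_cons_self a T)
    have h₂ := ih fun x hx => h x (mem_cons_of_mem hx)
    rw [sum_cons, Prod.fst_add, Prod.snd_add]
    omega

noncomputable def box (b : ℤ) (q : ℕ) (p : ℤ × ℤ) : Finset (ℤ × ℤ) :=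
  Ioc b (p.1 - q * b) ×ˢ Ioc b (p.2 - q * b)

lemma box_mono {b : ℤ} {q : ℕ} {s s' w w' : ℤ} (hs : s ≤ s') (hw : w ≤ w') :
    box b q (s, w) ⊆ box b q (s', w') :=
  product_subset_product (Ioc_subset_Ioc_right (by omega)) (Ioc_subset_Ioc_right (by omega))

lemma mem_box_self {b : ℤ} (q : ℕ) {p : ℤ × ℤ} (hb : b ≤ 0) (hp : p ∈ lexNegAbove b) :
    p ∈ box b q p := by
  have : (q : ℤ) * b ≤ 0 := mul_nonpos_of_nonneg_of_nonpos (by positivity) hb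
  simp only [box, mem_product, mem_Ioc]
  exact ⟨⟨hp.1, by omega⟩, hp.2.1, by omega⟩

/-- Boxes of rows `s ≤ (q + 1) * b` are empty. -/
lemma exists_box_subset (b : ℤ) (q : ℕ) (M : ℤ) (Mi : ℤ → ℤ) :
    ∃ S₀ : Finset (ℤ × ℤ), ∀ s < M, ∀ w < Mi s, box b q (s, w) ⊆ S₀ := by
  refine ⟨(Ioo ((q + 1) * b) M).biUnion fun s => box b q (s, Mi s - 1), fun s hs w hw => ?_⟩
  by_cases hsb : s ≤ (q + 1) * b
  · have : Ioc b (s - q * b) = ∅ := Ioc_eq_empty (by linarith)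
    simp [box, this]
  · have hmem : s ∈ Ioo ((q + 1) * b) M := mem_Ioo.2 ⟨not_le.1 hsb, hs⟩
    exact (box_mono le_rfl (Int.le_sub_one_of_lt hw)).trans
      (subset_biUnion_of_mem (fun s => box b q (s, Mi s - 1)) hmem)

noncomputable def limCoeff (b : ℤ) (q : ℕ) (c : ℤ × ℤ → R) (p : ℤ × ℤ) : R :=
  partialCoeff c (box b q p) p

def ProdTendsto (c : ℤ × ℤ → R) (g : LaurentSeries (LaurentSeries R)) : Prop :=
  ∀ (M : ℤ) (Mi : ℤ → ℤ), ∃ S₀ : Finset (ℤ × ℤ), ∀ S : Finset (ℤ × ℤ), S₀ ⊆ S →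
    MemW M Mi ((∏ p ∈ S, (1 - single₂ p (c p))) - g)

lemma two_le_card_of_sum_eq {T : Finset (ℤ × ℤ)} {p : ℤ × ℤ} (hT : ∑ x ∈ T, x = p)
    (hp : p ≠ 0) (hTp : T ≠ {p}) : 2 ≤ #T := by
  by_contra! h
  rcases (Nat.lt_succ_iff.1 h).eq_or_lt with h₁ | h₀
  · obtain ⟨x, rfl⟩ := card_eq_one.1 h₁
    rw [sum_singleton] at hT
    exact hTp (hT ▸ rfl)
  · rw [Nat.lt_one_iff, card_eq_zero] at h₀
    subst h₀
    exact hp (by simpa using hT.symm)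

section Convergence

variable {I : Ideal R} {q : ℕ} {b : ℤ} {c : ℤ × ℤ → R}

lemma mem_box_of_prod_ne_zero (hq : I ^ q = ⊥) (hc : ∀ x, c x ∈ I) (hb : b ≤ 0)
    (hs : support c ⊆ lexNegAbove b) {T : Finset (ℤ × ℤ)} (hT : ∏ y ∈ T, c y ≠ 0)
    {x : ℤ × ℤ} (hx : x ∈ T) : x ∈ box b q (∑ y ∈ T, y) := by
  have hbT : ∀ y ∈ T, b < y.1 ∧ b < y.2 := fun y hy =>
    have h := hs fun h₀ => hT (prod_eq_zero hy h₀)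
    ⟨h.1, h.2.1⟩
  have hcard : #(T.erase x) ≤ q := by
    have := mt (prod_eq_zero_of_le_card hq fun y _ => hc y) hT
    rw [card_erase_of_mem hx]; omega
  have hrest : ∀ f : ℤ × ℤ → ℤ, (∀ y ∈ T, b < f y) → q * b ≤ ∑ y ∈ T.erase x, f y := by
    intro f hf
    have := card_nsmul_le_sum (T.erase x) f b fun y hy => (hf y (mem_of_mem_erase hy)).le
    rw [nsmul_eq_mul] at this
    have : (q : ℤ) * b ≤ #(T.erase x) * b :=
      mul_le_mul_of_nonpos_right (by exact_mod_cast hcard) hb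
    linarith
  have h₁ := hrest Prod.fst fun y hy => (hbT y hy).1
  have h₂ := hrest Prod.snd fun y hy => (hbT y hy).2
  rw [← add_sum_erase T _ hx]
  simp only [box, mem_product, mem_Ioc, Prod.fst_add, Prod.snd_add, Prod.fst_sum, Prod.snd_sum]
  exact ⟨⟨(hbT x hx).1, by linarith⟩, (hbT x hx).2, by linarith⟩

lemma partialCoeff_inter_box (hq : I ^ q = ⊥) (hc : ∀ x, c x ∈ I) (hb : b ≤ 0)
    (hs : support c ⊆ lexNegAbove b) (S : Finset (ℤ × ℤ)) (p : ℤ × ℤ) :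
    partialCoeff c (S ∩ box b q p) p = partialCoeff c S p := by
  refine sum_subset (filter_subset_filter _ (powerset_mono.2 inter_subset_left)) ?_
  intro T hT hT'
  simp only [mem_filter, mem_powerset, subset_inter_iff, not_and] at hT hT'
  by_contra hne
  refine hT' ⟨hT.1, fun x hx => ?_⟩ hT.2
  rw [← hT.2]
  exact mem_box_of_prod_ne_zero hq hc hb hs (right_ne_zero_of_mul hne) hx

lemma prodTendsto_iff (hq : I ^ q = ⊥) (hc : ∀ x, c x ∈ I) (hb : b ≤ 0)
    (hs : support c ⊆ lexNegAbove b) (g : LaurentSeries (LaurentSeries R)) :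
    ProdTendsto c g ↔ ∀ p, limCoeff b q c p = coeff₂ g p := by
  constructor
  · intro h p
    obtain ⟨S₀, hS₀⟩ := h (p.1 + 1) (fun _ => p.2 + 1)
    have := hS₀ (S₀ ∪ box b q p) subset_union_left p.1 (lt_add_one _) p.2 (lt_add_one _)
    change coeff₂ _ p = 0 at this
    rwa [coeff₂_sub, coeff₂_prod, ← partialCoeff_inter_box hq hc hb hs,
      inter_eq_right.2 subset_union_right, sub_eq_zero] at this
  · intro h M Mi
    obtain ⟨S₀, hS₀⟩ := exists_box_subset b q M Mi
    refine ⟨S₀, fun S hS s hsM w hw => ?_⟩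
    change coeff₂ _ (s, w) = 0
    rw [coeff₂_sub, coeff₂_prod, ← partialCoeff_inter_box hq hc hb hs,
      inter_eq_right.2 ((hS₀ s hsM w hw).trans hS), ← limCoeff, h, sub_self]

/-- Apart from `-c p`, `partialCoeff c S p` is a sum of products of at least two values of `c`. -/
lemma partialCoeff_add_sub_mem {k : ℕ} {c₁ c₂ : ℤ × ℤ → R} (hc₁ : ∀ x, c₁ x ∈ I)
    (hc₂ : ∀ x, c₂ x ∈ I) (h : ∀ x, c₁ x - c₂ x ∈ I ^ k) {S : Finset (ℤ × ℤ)} {p : ℤ × ℤ}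
    (hpS : p ∈ S) (hp : p ≠ 0) :
    c₁ p + partialCoeff c₁ S p - (c₂ p + partialCoeff c₂ S p) ∈ I ^ (k + 1) := by
  have hsingle : {p} ∈ S.powerset.filter fun T => ∑ x ∈ T, x = p := by simp [hpS]
  simp only [partialCoeff, ← add_sum_erase _ _ hsingle, card_singleton, prod_singleton]
  rw [show ∀ a b x y : R, a + ((-1) ^ 1 * a + x) - (b + ((-1) ^ 1 * b + y)) = x - y by
    intros; ring, ← sum_sub_distrib]
  refine Ideal.sum_mem _ fun T hT => ?_
  simp only [mem_erase, mem_filter] at hT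
  rw [← mul_sub]
  exact Ideal.mul_mem_left _ _ (prod_sub_prod_mem_pow_succ (fun x _ => hc₁ x)
    (fun x _ => hc₂ x) (fun x _ => h x) (two_le_card_of_sum_eq hT.2.2 hp hT.1))

lemma eq_of_limCoeff_eq (hq : I ^ q = ⊥) (hb : b ≤ 0) {c₁ c₂ : ℤ × ℤ → R}
    (hc₁ : ∀ x, c₁ x ∈ I) (hc₂ : ∀ x, c₂ x ∈ I) (hs₁ : support c₁ ⊆ lexNegAbove b)
    (hs₂ : support c₂ ⊆ lexNegAbove b) (h : ∀ p, limCoeff b q c₁ p = limCoeff b q c₂ p) :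
    c₁ = c₂ := by
  have key : ∀ k p, c₁ p - c₂ p ∈ I ^ k := by
    intro k
    induction k with
    | zero => simp
    | succ k ih =>
      intro p
      by_cases hp : p ∈ lexNegAbove b
      · have := partialCoeff_add_sub_mem hc₁ hc₂ ih (mem_box_self q hb hp)
          (ne_zero_of_mem_lexNegAbove hp)
        rwa [← limCoeff, ← limCoeff, h p, add_sub_add_right_eq_sub] at this
      · rw [notMem_support.1 (mt (@hs₁ p) hp), notMem_support.1 (mt (@hs₂ p) hp), sub_self]
        exact zero_mem _
  funext p
  simpa [hq, sub_eq_zero] using key q p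

lemma eq_of_prodTendsto (hq : I ^ q = ⊥) (hb : b ≤ 0) {c₁ c₂ : ℤ × ℤ → R}
    (hc₁ : ∀ x, c₁ x ∈ I) (hc₂ : ∀ x, c₂ x ∈ I) (hs₁ : support c₁ ⊆ lexNegAbove b)
    (hs₂ : support c₂ ⊆ lexNegAbove b) {g : LaurentSeries (LaurentSeries R)}
    (h₁ : ProdTendsto c₁ g) (h₂ : ProdTendsto c₂ g) : c₁ = c₂ :=
  eq_of_limCoeff_eq hq hb hc₁ hc₂ hs₁ hs₂ fun p => by
    rw [(prodTendsto_iff hq hc₁ hb hs₁ g).1 h₁, (prodTendsto_iff hq hc₂ hb hs₂ g).1 h₂]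

end Convergence

/-- The `I`-adic valuation of `c p` is at least the number of steps of size `b` needed to reach
`p` from the origin. -/
def DepthBounded (I : Ideal R) (b : ℤ) (c : ℤ × ℤ → R) : Prop :=
  ∀ (k : ℕ) (p : ℤ × ℤ), p.1 < k * b ∨ p.2 < k * b → c p ∈ I ^ (k + 1)

open Classical in
/-- Fixed points of `step b q γ` solve `limCoeff c p = γ p` on `lexNegAbove ((q + 1) * b)`. -/
noncomputable def step (b : ℤ) (q : ℕ) (γ c : ℤ × ℤ → R) (p : ℤ × ℤ) : R :=
  if p ∈ lexNegAbove ((q + 1) * b) then c p + limCoeff ((q + 1) * b) q c p - γ p else 0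

section Existence

variable {I : Ideal R} {q : ℕ} {b : ℤ} {c γ : ℤ × ℤ → R}

lemma depthBounded_zero : DepthBounded I b (0 : ℤ × ℤ → R) :=
  fun _ _ _ => zero_mem _

lemma depthBounded_of_support_subset (hb : b ≤ 0) (hγ : ∀ x, γ x ∈ I)
    (hs : support γ ⊆ lexNegAbove b) : DepthBounded I b γ := by
  rintro (_ | k) p hp
  · simpa using hγ p
  · by_contra h
    have hp' := hs fun h₀ => h (h₀ ▸ zero_mem _)
    have : ((k + 1 : ℕ) : ℤ) * b ≤ b := by push_cast; nlinarith
    exact hp.elim (fun _ => absurd hp'.1 (by omega)) fun _ => absurd hp'.2.1 (by omega)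

lemma DepthBounded.mem (hc : DepthBounded I b c) {b' : ℤ} (hs : support c ⊆ lexNegAbove b')
    (p : ℤ × ℤ) : c p ∈ I := by
  by_cases h : c p = 0
  · simp [h]
  · have hp := (hs h).2.2
    simpa using hc 0 p (by simp; omega)

lemma DepthBounded.prod_mem (hc : DepthBounded I b c) (hb : b ≤ 0) (T : Finset (ℤ × ℤ))
    {k : ℕ} (hT : (∑ x ∈ T, x).1 < k * b ∨ (∑ x ∈ T, x).2 < k * b) :
    ∏ x ∈ T, c x ∈ I ^ (k + 1) := by
  classical
  induction T using Finset.induction_on generalizing k with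
  | empty =>
    have : (k : ℤ) * b ≤ 0 := mul_nonpos_of_nonneg_of_nonpos (by positivity) hb
    simp at hT; omega
  | insert a T ha ih =>
    rw [prod_insert ha]
    rw [sum_insert ha, Prod.fst_add, Prod.snd_add] at hT
    by_cases hfar : a.1 < k * b ∨ a.2 < k * b
    · exact Ideal.mul_mem_right _ _ (hc k a hfar)
    have hex : ∃ j : ℕ, ¬(a.1 < j * b ∨ a.2 < j * b) := ⟨k, hfar⟩
    obtain ⟨j, hj, hmin⟩ : ∃ j : ℕ, ¬(a.1 < j * b ∨ a.2 < j * b) ∧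
        ∀ i < j, a.1 < i * b ∨ a.2 < i * b :=
      ⟨Nat.find hex, Nat.find_spec hex, fun i hi => not_not.1 (Nat.find_min hex hi)⟩
    have hjk : j ≤ k := by
      by_contra! hkj
      exact hfar (hmin k hkj)
    have hca : c a ∈ I ^ j := by
      rcases j with _ | i
      · simp
      · exact hc i a (hmin i (lt_add_one i))
    have hcast : ((k - j : ℕ) : ℤ) * b = k * b - j * b := by
      push_cast [Nat.cast_sub hjk]; ring
    have hrest := @ih (k - j) (by rw [hcast]; omega)
    have := Ideal.mul_mem_mul hca hrest
    rwa [← pow_add, show j + (k - j + 1) = k + 1 by omega] at this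

lemma DepthBounded.sum_mem_of_prod_ne_zero (hq : I ^ q = ⊥) (hb : b < 0)
    (hc : DepthBounded I b c) (hs : support c ⊆ lexNegAbove ((q + 1) * b))
    {T : Finset (ℤ × ℤ)} (hT : T.Nonempty) (hprod : ∏ x ∈ T, c x ≠ 0) :
    ∑ x ∈ T, x ∈ lexNegAbove ((q + 1) * b) := by
  have hnear : ¬((∑ x ∈ T, x).1 < q * b ∨ (∑ x ∈ T, x).2 < q * b) := fun h =>
    hprod (by simpa [hq] using Ideal.pow_le_pow_right (Nat.le_succ q) (hc.prod_mem hb.le T h))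
  have hlex := sum_lexNeg hT fun x hx => (hs fun h₀ => hprod (prod_eq_zero hx h₀)).2.2
  push Not at hnear
  exact ⟨by linarith, by linarith, hlex⟩

lemma partialCoeff_eq_ite {A : Set (ℤ × ℤ)}
    (hA : ∀ T : Finset (ℤ × ℤ), T.Nonempty → ∏ x ∈ T, c x ≠ 0 → ∑ x ∈ T, x ∈ A)
    (S : Finset (ℤ × ℤ)) {p : ℤ × ℤ} (hp : p ∉ A) :
    partialCoeff c S p = if p = 0 then 1 else 0 := by
  rw [partialCoeff, sum_filter, sum_eq_single ∅]
  · simp [eq_comm]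
  · intro T _ hT
    split_ifs with hsum
    · by_contra hprod
      exact hp (hsum ▸ hA T (nonempty_iff_ne_empty.2 hT) (right_ne_zero_of_mul hprod))
    · rfl
  · simp

lemma depthBounded_step (hc : DepthBounded I b c) (hγ : DepthBounded I b γ) (hb : b ≤ 0) :
    DepthBounded I b (step b q γ c) := by
  intro k p hp
  unfold step
  split_ifs
  · refine sub_mem (add_mem (hc k p hp) (Ideal.sum_mem _ fun T hT => ?_)) (hγ k p hp)
    rw [mem_filter] at hT
    exact Ideal.mul_mem_left _ _ (hc.prod_mem hb T (hT.2 ▸ hp))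
  · exact zero_mem _

lemma support_step_subset : support (step b q γ c) ⊆ lexNegAbove ((q + 1) * b) := by
  intro p hp
  by_contra h
  exact hp (by simp [step, h])

lemma step_sub_step_mem (hb : b ≤ 0) {k : ℕ} {c₁ c₂ : ℤ × ℤ → R} (hc₁ : ∀ x, c₁ x ∈ I)
    (hc₂ : ∀ x, c₂ x ∈ I) (h : ∀ x, c₁ x - c₂ x ∈ I ^ k) (p : ℤ × ℤ) :
    step b q γ c₁ p - step b q γ c₂ p ∈ I ^ (k + 1) := by
  have hB : ((q : ℤ) + 1) * b ≤ 0 := mul_nonpos_of_nonneg_of_nonpos (by positivity) hb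
  unfold step
  split_ifs with hp
  · have := partialCoeff_add_sub_mem hc₁ hc₂ h (mem_box_self q hB hp)
      (ne_zero_of_mem_lexNegAbove hp)
    convert this using 1
    simp only [limCoeff]; ring
  · simp

theorem exists_limCoeff_eq (hq : I ^ q = ⊥) (hb : b < 0) (hγ : ∀ x, γ x ∈ I)
    (hs : support γ ⊆ lexNegAbove b) :
    ∃ c : ℤ × ℤ → R, support c ⊆ lexNegAbove ((q + 1) * b) ∧ (∀ x, c x ∈ I) ∧
      ∀ p, limCoeff ((q + 1) * b) q c p = γ p + if p = 0 then 1 else 0 := by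
  have hB : ((q : ℤ) + 1) * b ≤ b := by nlinarith
  obtain ⟨c, ⟨hcd, hcs⟩, hfix⟩ := exists_isFixedPt_of_pow_eq_bot hq
    (P := fun c => DepthBounded I b c ∧ support c ⊆ lexNegAbove ((q + 1) * b))
    (fun c hc => ⟨depthBounded_step hc.1 (depthBounded_of_support_subset hb.le hγ hs) hb.le,
      support_step_subset⟩)
    (fun k c₁ c₂ h₁ h₂ h => step_sub_step_mem hb.le (h₁.1.mem h₁.2) (h₂.1.mem h₂.2) h)
    (x := 0) ⟨depthBounded_zero, by simp⟩
  refine ⟨c, hcs, hcd.mem hcs, fun p => ?_⟩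
  by_cases hp : p ∈ lexNegAbove ((q + 1) * b)
  · have := congrFun hfix p
    simp only [step, if_pos hp] at this
    rw [if_neg (ne_zero_of_mem_lexNegAbove hp), add_zero]
    linear_combination this
  · have hγp : γ p = 0 := notMem_support.1 fun h => hp (lexNegAbove_mono hB (hs h))
    rw [limCoeff, hγp, zero_add,
      partialCoeff_eq_ite (fun T hT hprod => hcd.sum_mem_of_prod_ne_zero hq hb hcs hT hprod) _ hp]

end Existence

lemma exists_coeff₂_eq_zero (x : LaurentSeries (LaurentSeries R)) (s₀ : ℤ) :
    ∃ b : ℤ, ∀ p : ℤ × ℤ, p.1 ≤ s₀ → (p.1 ≤ b ∨ p.2 ≤ b) → coeff₂ x p = 0 := by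
  obtain ⟨B, hB⟩ := ((Icc x.order s₀).image fun s => -(x.coeff s).order).exists_le
  refine ⟨min x.order (-B) - 1, fun p hp hpb => ?_⟩
  by_cases hrow : p.1 < x.order
  · simp [coeff₂, HahnSeries.coeff_eq_zero_of_lt_order hrow]
  · have := hB _ (mem_image_of_mem _ (mem_Icc.2 ⟨not_lt.1 hrow, hp⟩))
    exact HahnSeries.coeff_eq_zero_of_lt_order (by omega)

lemma exists_support_coeff₂_subset {g : LaurentSeries (LaurentSeries R)} (hg : InPGroup g) :
    ∃ b < 0, support (coeff₂ (g - 1)) ⊆ lexNegAbove b := by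
  obtain ⟨b, hb⟩ := exists_coeff₂_eq_zero (g - 1) 0
  refine ⟨min b (-1), by omega, fun p hp => ?_⟩
  have hp₁ : p.1 ≤ 0 := by
    by_contra! h
    exact hp (by simp [coeff₂, hg.1 p.1 h])
  have hlex : p.1 < 0 ∨ (p.1 = 0 ∧ p.2 ≤ -1) := by
    by_contra! h
    have h₀ : p.1 = 0 := by omega
    exact hp (by simp only [coeff₂, h₀]; exact hg.2.1 _ (by omega))
  have hbp : ¬(p.1 ≤ b ∨ p.2 ≤ b) := fun h => hp (hb p hp₁ h)
  exact ⟨by omega, by omega, hlex⟩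

theorem pGroup_unique_product_decomposition
    (hN : ∃ q : ℕ, nilradical R ^ q = ⊥)
    (g : LaurentSeries (LaurentSeries R)) (hg : InPGroup g) :
    ∃! c : ℤ × ℤ → R,
      (∀ p : ℤ × ℤ, c p ≠ 0 → (p.1 < 0 ∨ (p.1 = 0 ∧ p.2 ≤ -1))) ∧
      (∃ n m : ℤ, n < 0 ∧ ∀ p : ℤ × ℤ, c p ≠ 0 → n < p.1 ∧ m < p.2) ∧
      (∀ p : ℤ × ℤ, IsNilpotent (c p)) ∧
      (∀ (M : ℤ) (Mi : ℤ → ℤ), ∃ S₀ : Finset (ℤ × ℤ), ∀ S : Finset (ℤ × ℤ), S₀ ⊆ S →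
        MemW M Mi
          ((∏ p ∈ S,
              ((1 : LaurentSeries (LaurentSeries R)) -
                HahnSeries.single p.1 (HahnSeries.single p.2 (c p)))) - g)) := by
  obtain ⟨q, hq⟩ := hN
  obtain ⟨b, hb, hγ⟩ := exists_support_coeff₂_subset hg
  obtain ⟨c, hcs, hcN, hc⟩ := exists_limCoeff_eq (γ := coeff₂ (g - 1)) hq hb
    (fun p => mem_nilradical.2 (hg.2.2 p.1 p.2)) hγ
  have hB : ((q : ℤ) + 1) * b < 0 := by nlinarith
  have hconv : ProdTendsto c g := (prodTendsto_iff hq hcN hB.le hcs g).2 fun p => by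
    rw [hc, coeff₂_sub, coeff₂_one, sub_add_cancel]
  refine ⟨c, ⟨fun p hp => (hcs hp).2.2, ⟨_, _, hB, fun p hp => ⟨(hcs hp).1, (hcs hp).2.1⟩⟩,
    fun p => mem_nilradical.1 (hcN p), hconv⟩, ?_⟩
  rintro c' ⟨hlex, ⟨n, m, hn, hnm⟩, hnil, hconv'⟩
  have hb' : min (min n m) (((q : ℤ) + 1) * b) ≤ 0 := by omega
  refine eq_of_prodTendsto hq hb' (fun p => mem_nilradical.2 (hnil p)) hcN
    (fun p hp => ?_) (hcs.trans (lexNegAbove_mono (min_le_right _ _))) hconv' hconv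
  exact ⟨by have := (hnm p hp).1; omega, by have := (hnm p hp).2; omega, hlex p hp⟩

end CC
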